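/- Let Ω = {(x,y,t) ∈ H¹ : x²+y² < 1, |t| < 1} and v(x,y,t) = t. Then v is H-convex (indeed affine on each horizontal plane), ∂_H v(ξ) = {(2y, −2x)} for every ξ = (x,y,t) ∈ Ω, and ∂_H v(Ω) = B_{R²}(0, 2), the open Euclidean ball of radius 2. -/

import Mathlib

/-!
On the horizontal plane through `ξ₀ = (x₀, y₀, t₀)` the vertical coordinate is the affine function
`t₀ + (2y₀, -2x₀) · (Pr₁ ξ - Pr₁ ξ₀)`. Hence `t` is `H`-convex (with equality), and `(2y₀, -2x₀)` lies
in its horizontal subdifferential; on an open set no other slope `p` does, because the inequality fails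
at the point of the plane over `Pr₁ ξ₀ + s (p - (2y₀, -2x₀))` for small `s > 0`. The normal mapping is
then the image of the cylinder under `(x, y, t) ↦ (2y, -2x)`, the open disc of radius `2`.
-/

/-- A point of the first Heisenberg group `ℍ¹ = ℝ³`, coordinates `(x, y, t)`. -/
abbrev H1 := ℝ × ℝ × ℝ

/-- Heisenberg group law on `ℍ¹`. -/
def hmul1 (ξ η : H1) : H1 :=
  (ξ.1 + η.1, ξ.2.1 + η.2.1, ξ.2.2 + η.2.2 + 2 * (ξ.2.1 * η.1 - ξ.1 * η.2.1))

/-- Heisenberg inverse on `ℍ¹`. -/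
def hinv1 (ξ : H1) : H1 := (-ξ.1, -ξ.2.1, -ξ.2.2)

/-- Heisenberg dilation on `ℍ¹`. -/
def hdil1 (l : ℝ) (ξ : H1) : H1 := (l * ξ.1, l * ξ.2.1, l ^ 2 * ξ.2.2)

/-- The horizontal plane at `ξ₀ = (x₀,y₀,t₀)`: `t = t₀ + 2(x y₀ - x₀ y)`. -/
def Hplane1 (ξ₀ : H1) : Set H1 :=
  {ξ | ξ.2.2 = ξ₀.2.2 + 2 * (ξ.1 * ξ₀.2.1 - ξ₀.1 * ξ.2.1)}

/-- Dot product on `ℝ²`. -/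
def dot2 (p q : ℝ × ℝ) : ℝ := p.1 * q.1 + p.2 * q.2

/-- The horizontal subdifferential on `ℍ¹`. -/
def subdiff1 (Ω : Set H1) (u : H1 → ℝ) (ξ₀ : H1) : Set (ℝ × ℝ) :=
  {p | ∀ ξ ∈ Ω ∩ Hplane1 ξ₀, u ξ ≥ u ξ₀ + dot2 p (ξ.1 - ξ₀.1, ξ.2.1 - ξ₀.2.1)}

/-- `H`-convexity of a function on a subset of `ℍ¹`. -/
def HConvexOn1 (S : Set H1) (u : H1 → ℝ) : Prop :=
  ∀ ξ₁ ∈ S, ∀ ξ₂ ∈ S, ξ₁ ∈ Hplane1 ξ₂ → ∀ l ∈ Set.Icc (0 : ℝ) 1,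
    u (hmul1 ξ₁ (hdil1 l (hmul1 (hinv1 ξ₁) ξ₂))) ≤ (1 - l) * u ξ₁ + l * u ξ₂

open Filter Topology

lemma hmul1_hdil1_snd_snd_of_mem_Hplane1 {ξ₁ ξ₂ : H1} (h : ξ₁ ∈ Hplane1 ξ₂) (l : ℝ) :
    (hmul1 ξ₁ (hdil1 l (hmul1 (hinv1 ξ₁) ξ₂))).2.2 = (1 - l) * ξ₁.2.2 + l * ξ₂.2.2 := by
  simp only [Hplane1, Set.mem_ofPred_eq] at h
  simp only [hmul1, hinv1, hdil1]
  linear_combination l * (1 - l) * h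

theorem hconvexOn1_snd_snd (S : Set H1) : HConvexOn1 S (fun ξ => ξ.2.2) :=
  fun _ _ _ _ h l _ => (hmul1_hdil1_snd_snd_of_mem_Hplane1 h l).le

lemma snd_snd_eq_of_mem_Hplane1 {ξ₀ ξ : H1} (h : ξ ∈ Hplane1 ξ₀) :
    ξ.2.2 = ξ₀.2.2 + dot2 (2 * ξ₀.2.1, -2 * ξ₀.1) (ξ.1 - ξ₀.1, ξ.2.1 - ξ₀.2.1) := by
  simp only [Hplane1, Set.mem_ofPred_eq] at h
  simp only [dot2]
  linear_combination h

def hplaneLift1 (ξ₀ : H1) (d : ℝ × ℝ) : H1 :=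
  (ξ₀.1 + d.1, ξ₀.2.1 + d.2, ξ₀.2.2 + 2 * (d.1 * ξ₀.2.1 - ξ₀.1 * d.2))

lemma hplaneLift1_mem_Hplane1 (ξ₀ : H1) (d : ℝ × ℝ) : hplaneLift1 ξ₀ d ∈ Hplane1 ξ₀ := by
  simp only [hplaneLift1, Hplane1, Set.mem_ofPred_eq]
  ring

lemma continuous_hplaneLift1 (ξ₀ : H1) : Continuous (hplaneLift1 ξ₀) := by
  unfold hplaneLift1
  fun_prop

theorem subdiff1_snd_snd_of_isOpen {Ω : Set H1} (hΩ : IsOpen Ω) {ξ₀ : H1} (hξ₀ : ξ₀ ∈ Ω) :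
    subdiff1 Ω (fun ξ => ξ.2.2) ξ₀ = {(2 * ξ₀.2.1, -2 * ξ₀.1)} := by
  ext p
  refine ⟨fun hp => ?_, ?_⟩
  · set q : ℝ × ℝ := (2 * ξ₀.2.1, -2 * ξ₀.1)
    -- Testing at the point over `Pr₁ ξ₀ + s (p - q)` gives `s |p - q|² ≤ 0`.
    let γ : ℝ → H1 := fun s => hplaneLift1 ξ₀ (s • (p - q))
    have hγ : ∀ᶠ s in 𝓝[>] (0 : ℝ), γ s ∈ Ω := by
      refine nhdsWithin_le_nhds (((continuous_hplaneLift1 ξ₀).comp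
        (continuous_id.smul continuous_const)).continuousAt.preimage_mem_nhds ?_)
      simpa [γ, hplaneLift1] using hΩ.mem_nhds hξ₀
    obtain ⟨s, hsΩ, hs⟩ := (hγ.and self_mem_nhdsWithin).exists
    have hineq := hp (γ s) ⟨hsΩ, hplaneLift1_mem_Hplane1 _ _⟩
    simp only [γ, hplaneLift1, dot2, q, Prod.smul_fst, Prod.smul_snd, Prod.fst_sub,
      Prod.snd_sub, smul_eq_mul, add_sub_cancel_left] at hineq
    have hsq : (p.1 - 2 * ξ₀.2.1) ^ 2 + (p.2 + 2 * ξ₀.1) ^ 2 ≤ 0 :=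
      nonpos_of_mul_nonpos_right (by linear_combination hineq) hs
    exact Prod.ext (by nlinarith [sq_nonneg (p.1 - 2 * ξ₀.2.1), sq_nonneg (p.2 + 2 * ξ₀.1)])
      (by nlinarith [sq_nonneg (p.1 - 2 * ξ₀.2.1), sq_nonneg (p.2 + 2 * ξ₀.1)])
  · rintro rfl ξ ⟨-, hξ⟩
    exact (snd_snd_eq_of_mem_Hplane1 hξ).ge

lemma isOpen_cylinder1 : IsOpen {ξ : H1 | ξ.1 ^ 2 + ξ.2.1 ^ 2 < 1 ∧ |ξ.2.2| < 1} :=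
  (isOpen_lt (by fun_prop : Continuous fun ξ : H1 => ξ.1 ^ 2 + ξ.2.1 ^ 2) continuous_const).inter
    (isOpen_lt (by fun_prop : Continuous fun ξ : H1 => |ξ.2.2|) continuous_const)

lemma image_cylinder1 :
    (fun ξ : H1 => ((2 * ξ.2.1, -2 * ξ.1) : ℝ × ℝ)) ''
        {ξ : H1 | ξ.1 ^ 2 + ξ.2.1 ^ 2 < 1 ∧ |ξ.2.2| < 1} =
      {p : ℝ × ℝ | p.1 ^ 2 + p.2 ^ 2 < 4} := by
  ext p
  constructor
  · rintro ⟨ξ, ⟨hxy, -⟩, rfl⟩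
    simp only [Set.mem_ofPred_eq]
    nlinarith
  · intro hp
    refine ⟨(-p.2 / 2, p.1 / 2, 0), ⟨?_, by simp⟩, ?_⟩
    · simp only [Set.mem_ofPred_eq] at hp ⊢
      nlinarith
    · ext <;> simp only <;> ring

/-- For `v(x,y,t) = t` on the cylinder `Ω = {x²+y²<1, |t|<1} ⊆ ℍ¹`: `v` is
`H`-convex, `∂_H v(ξ) = {(2y, -2x)}` for every `ξ = (x,y,t) ∈ Ω`, and
`∂_H v(Ω)` is the open Euclidean ball of radius `2`. -/
theorem vertical_coordinate_normal_mapping :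
    HConvexOn1 {ξ : H1 | ξ.1 ^ 2 + ξ.2.1 ^ 2 < 1 ∧ |ξ.2.2| < 1} (fun ξ => ξ.2.2) ∧
    (∀ ξ ∈ {ξ : H1 | ξ.1 ^ 2 + ξ.2.1 ^ 2 < 1 ∧ |ξ.2.2| < 1},
      subdiff1 {ξ : H1 | ξ.1 ^ 2 + ξ.2.1 ^ 2 < 1 ∧ |ξ.2.2| < 1} (fun ξ => ξ.2.2) ξ
        = {(2 * ξ.2.1, -2 * ξ.1)}) ∧
    (⋃ ξ ∈ {ξ : H1 | ξ.1 ^ 2 + ξ.2.1 ^ 2 < 1 ∧ |ξ.2.2| < 1},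
      subdiff1 {ξ : H1 | ξ.1 ^ 2 + ξ.2.1 ^ 2 < 1 ∧ |ξ.2.2| < 1} (fun ξ => ξ.2.2) ξ)
        = {p : ℝ × ℝ | p.1 ^ 2 + p.2 ^ 2 < 4} := by
  have hsubdiff := fun ξ hξ => subdiff1_snd_snd_of_isOpen isOpen_cylinder1 (ξ₀ := ξ) hξ
  refine ⟨hconvexOn1_snd_snd _, hsubdiff, ?_⟩
  rw [Set.iUnion₂_congr hsubdiff, ← Set.image_eq_iUnion, image_cylinder1]
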